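/- For every real s > 1 the series S(s) = Σ_{k=1}^{∞} (2k+1)·(k(k+1))^{−s} converges, and lim_{s→1⁺} (S(s) − 1/(s−1)) = 2γ − 1, where γ is the Euler–Mascheroni constant. -/

import Mathlib

open Real Filter Topology

/-!
Since `(2k+1)(k(k+1))^{-s} = 2k^{1-2s} + O(k^{-2s})` uniformly for `s` near `1`, we have
`S(s) = 2ζ(2s-1) + R(s)`, where `R(s) = ∑ₖ sphereZetaRemainder s k` is continuous at `s = 1`
by dominated convergence. At `s = 1` the remainder terms are `-1/(k(k+1))`, which telescope
to `R(1) = -1`, and `2ζ(2s-1) - 1/(s-1) = 2(ζ(2s-1) - 1/((2s-1)-1)) → 2γ`.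
-/

/-- The spectral zeta function of the round unit sphere:
`S(s) = Σ_{k ≥ 1} (2k+1)(k(k+1))^{−s}` (indexed here by `k+1`, `k : ℕ`). -/
noncomputable def S (s : ℝ) : ℝ :=
  ∑' k : ℕ, (2 * ((k : ℝ) + 1) + 1) * (((k : ℝ) + 1) * (((k : ℝ) + 1) + 1)) ^ (-s)

lemma one_add_mul_le_rpow_one_add_of_nonpos {t p : ℝ} (ht : -1 < t) (hp : p ≤ 0) :
    1 + p * t ≤ (1 + t) ^ p := by
  have h : 0 < 1 + t := by linarith
  have hlog : log (1 + t) ≤ t := by linarith [log_le_sub_one_of_pos h]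
  calc 1 + p * t ≤ 1 + log (1 + t) * p := by nlinarith
    _ ≤ exp (log (1 + t) * p) := by linarith [add_one_le_exp (log (1 + t) * p)]
    _ = (1 + t) ^ p := (rpow_def_of_pos h p).symm

lemma rpow_sub_rpow_add_one_le {x c : ℝ} (hx : 0 < x) (hc : c ≤ 0) :
    x ^ c - (x + 1) ^ c ≤ -c * x ^ (c - 1) := by
  have hsplit : (x + 1) ^ c = x ^ c * (1 + x⁻¹) ^ c := by
    rw [← mul_rpow hx.le (by positivity), mul_add, mul_one, mul_inv_cancel₀ hx.ne']
  have hbern := one_add_mul_le_rpow_one_add_of_nonpos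
    (by linarith [inv_pos.2 hx] : -1 < x⁻¹) hc
  have := mul_le_mul_of_nonneg_left hbern (rpow_nonneg hx.le c)
  rw [hsplit, rpow_sub_one hx.ne', div_eq_mul_inv]
  linarith

lemma summable_nat_add_one_rpow_neg {p : ℝ} (hp : 1 < p) :
    Summable (fun n : ℕ => ((n : ℝ) + 1) ^ (-p)) := by
  have := (summable_nat_add_iff 1).2 (summable_nat_rpow.2 (by linarith : -p < -1))
  exact this.congr fun n => by push_cast; rfl

lemma tendsto_tsum_nat_add_one_rpow_neg_sub_one_div :
    Tendsto (fun t : ℝ => ∑' n : ℕ, ((n : ℝ) + 1) ^ (-t) - 1 / (t - 1)) (𝓝[>] 1)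
      (𝓝 eulerMascheroniConstant) := by
  refine ((Complex.continuous_re.tendsto _).comp
    ZetaAsymptotics.tendsto_riemannZeta_sub_one_div_nhds_right).congr'
    (eventually_nhdsWithin_of_forall fun t (ht : 1 < t) => ?_)
  have hzeta : riemannZeta t = ((∑' n : ℕ, ((n : ℝ) + 1) ^ (-t) : ℝ) : ℂ) := by
    rw [zeta_eq_tsum_one_div_nat_add_one_cpow (by simpa using ht), Complex.ofReal_tsum]
    congr 1 with n
    rw [rpow_neg (by positivity), Complex.ofReal_inv, Complex.ofReal_cpow (by positivity),
      one_div]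
    push_cast
    rfl
  rw [Function.comp_apply, hzeta,
    show (1 : ℂ) / (t - 1) = ((1 / (t - 1) : ℝ) : ℂ) by push_cast; rfl,
    ← Complex.ofReal_sub, Complex.ofReal_re]

lemma hasSum_sub_succ_of_antitone {f : ℕ → ℝ} {l : ℝ} (hf : Antitone f)
    (hlim : Tendsto f atTop (𝓝 l)) : HasSum (fun n => f n - f (n + 1)) (f 0 - l) := by
  rw [hasSum_iff_tendsto_nat_of_nonneg fun n => sub_nonneg.2 (hf n.le_succ)]
  simp_rw [Finset.sum_range_sub']
  exact tendsto_const_nhds.sub hlim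

noncomputable def sphereZetaRemainder (s x : ℝ) : ℝ :=
  (2 * x + 1) * (x * (x + 1)) ^ (-s) - 2 * x ^ (-(2 * s - 1))

lemma sphereZetaRemainder_eq {s x : ℝ} (hx : 0 < x) :
    sphereZetaRemainder s x = -(x ^ (-s) * (x ^ (1 - s) - (x + 1) ^ (1 - s))
      + x ^ (1 - s) * (x ^ (-s) - (x + 1) ^ (-s))) := by
  have hmul : ∀ y : ℝ, 0 < y → y ^ (1 - s) = y * y ^ (-s) := fun y hy => by
    rw [sub_eq_add_neg, rpow_add hy, rpow_one]
  rw [sphereZetaRemainder, mul_rpow hx.le (by positivity),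
    show -(2 * s - 1) = (1 - s) + -s by ring, rpow_add hx, hmul x hx, hmul (x + 1) (by positivity)]
  ring

lemma abs_sphereZetaRemainder_le {s x : ℝ} (hs : 1 ≤ s) (hx : 0 < x) :
    |sphereZetaRemainder s x| ≤ (2 * s - 1) * x ^ (-(2 * s)) := by
  have hA := rpow_sub_rpow_add_one_le hx (by linarith : 1 - s ≤ 0)
  have hB := rpow_sub_rpow_add_one_le hx (by linarith : -s ≤ 0)
  have hx₁ : x ≤ x + 1 := by linarith
  have hA₀ := sub_nonneg.2 (rpow_le_rpow_of_nonpos hx hx₁ (by linarith : 1 - s ≤ 0))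
  have hB₀ := sub_nonneg.2 (rpow_le_rpow_of_nonpos hx hx₁ (by linarith : -s ≤ 0))
  rw [sphereZetaRemainder_eq hx, abs_neg, abs_of_nonneg (by positivity)]
  calc x ^ (-s) * (x ^ (1 - s) - (x + 1) ^ (1 - s)) + x ^ (1 - s) * (x ^ (-s) - (x + 1) ^ (-s))
      ≤ x ^ (-s) * (-(1 - s) * x ^ (1 - s - 1)) + x ^ (1 - s) * (- -s * x ^ (-s - 1)) := by
        gcongr
    _ = (2 * s - 1) * x ^ (-(2 * s)) := by
        have e₁ : x ^ (-s) * x ^ (1 - s - 1) = x ^ (-(2 * s)) := by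
          rw [← rpow_add hx]; ring_nf
        have e₂ : x ^ (1 - s) * x ^ (-s - 1) = x ^ (-(2 * s)) := by
          rw [← rpow_add hx]; ring_nf
        linear_combination (s - 1) * e₁ + s * e₂

lemma sphereZeta_term_eq (s x : ℝ) :
    (2 * x + 1) * (x * (x + 1)) ^ (-s) = 2 * x ^ (-(2 * s - 1)) + sphereZetaRemainder s x := by
  rw [sphereZetaRemainder, add_sub_cancel]

lemma summable_sphereZetaRemainder {s : ℝ} (hs : 1 ≤ s) :
    Summable (fun n : ℕ => sphereZetaRemainder s (n + 1)) :=
  ((summable_nat_add_one_rpow_neg (by linarith : 1 < 2 * s)).mul_left (2 * s - 1)).of_norm_bounded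
    fun n => abs_sphereZetaRemainder_le hs (by positivity)

lemma S_eq_two_mul_tsum_add_tsum_sphereZetaRemainder {s : ℝ} (hs : 1 < s) :
    S s = 2 * ∑' n : ℕ, ((n : ℝ) + 1) ^ (-(2 * s - 1))
      + ∑' n : ℕ, sphereZetaRemainder s (n + 1) := by
  rw [← tsum_mul_left, ← Summable.tsum_add
    ((summable_nat_add_one_rpow_neg (by linarith)).mul_left 2) (summable_sphereZetaRemainder hs.le)]
  exact tsum_congr fun n => sphereZeta_term_eq s _

lemma sphereZetaRemainder_one {x : ℝ} (hx : 0 < x) :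
    sphereZetaRemainder 1 x = -(1 / x - 1 / (x + 1)) := by
  rw [sphereZetaRemainder, show -(2 * (1 : ℝ) - 1) = -1 by norm_num, rpow_neg_one, rpow_neg_one]
  field_simp
  ring

lemma hasSum_sphereZetaRemainder_one :
    HasSum (fun n : ℕ => sphereZetaRemainder 1 (n + 1)) (-1) := by
  have h := hasSum_sub_succ_of_antitone (f := fun n : ℕ => 1 / ((n : ℝ) + 1))
    (fun m n hmn => by dsimp only; gcongr) tendsto_one_div_add_atTop_nhds_zero_nat
  simp only [Nat.cast_zero, zero_add, div_one, sub_zero, Nat.cast_add_one] at h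
  rw [show (fun n : ℕ => sphereZetaRemainder 1 (n + 1))
      = fun n : ℕ => -(1 / ((n : ℝ) + 1) - 1 / ((n : ℝ) + 1 + 1))
    from funext fun n => sphereZetaRemainder_one (by positivity)]
  exact h.neg

lemma continuous_sphereZetaRemainder {x : ℝ} (hx : 0 < x) :
    Continuous (fun s => sphereZetaRemainder s x) := by
  unfold sphereZetaRemainder
  fun_prop (disch := positivity)

lemma tendsto_tsum_sphereZetaRemainder :
    Tendsto (fun s => ∑' n : ℕ, sphereZetaRemainder s (n + 1)) (𝓝[>] 1) (𝓝 (-1)) := by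
  rw [← hasSum_sphereZetaRemainder_one.tsum_eq]
  refine tendsto_tsum_of_dominated_convergence
    ((summable_nat_add_one_rpow_neg one_lt_two).mul_left 2)
    (fun n => ((continuous_sphereZetaRemainder (by positivity)).tendsto 1).mono_left
      nhdsWithin_le_nhds) ?_
  filter_upwards [Ioc_mem_nhdsGT (show (1 : ℝ) < 3 / 2 by norm_num)] with s ⟨hs₁, hs₂⟩ n
  have hn : (1 : ℝ) ≤ n + 1 := by simp
  calc |sphereZetaRemainder s (n + 1)| ≤ (2 * s - 1) * ((n : ℝ) + 1) ^ (-(2 * s)) :=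
        abs_sphereZetaRemainder_le hs₁.le (by positivity)
    _ ≤ 2 * ((n : ℝ) + 1) ^ (-2 : ℝ) := by
        gcongr ?_ * ?_
        · linarith
        · exact rpow_le_rpow_of_exponent_le hn (by linarith)

/-- For every real `s > 1` the sphere's spectral zeta series converges, and
`lim_{s→1⁺}(S(s) − 1/(s−1)) = 2γ − 1` where `γ` is the Euler–Mascheroni constant. -/
theorem sphere_zeta_regularized :
    (∀ s : ℝ, 1 < s →
      Summable (fun k : ℕ =>
        (2 * ((k : ℝ) + 1) + 1) * (((k : ℝ) + 1) * (((k : ℝ) + 1) + 1)) ^ (-s))) ∧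
      Tendsto (fun s : ℝ => S s - 1 / (s - 1)) (𝓝[>] 1)
        (𝓝 (2 * Real.eulerMascheroniConstant - 1)) := by
  refine ⟨fun s hs => ?_, ?_⟩
  · exact (((summable_nat_add_one_rpow_neg (p := 2 * s - 1) (by linarith)).mul_left 2).add
      (summable_sphereZetaRemainder hs.le)).congr fun n => (sphereZeta_term_eq s _).symm
  · have h2s : Tendsto (fun s : ℝ => 2 * s - 1) (𝓝[>] 1) (𝓝[>] 1) := by
      refine tendsto_nhdsWithin_of_tendsto_nhds_of_eventually_within _ ?_
        (eventually_nhdsWithin_of_forall fun s (hs : 1 < s) => show 1 < 2 * s - 1 by linarith)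
      have hcont : Continuous (fun s : ℝ => 2 * s - 1) := by fun_prop
      simpa using (hcont.tendsto' 1 1 (by norm_num)).mono_left nhdsWithin_le_nhds
    have hlim := ((tendsto_tsum_nat_add_one_rpow_neg_sub_one_div.comp h2s).const_mul 2).add
      tendsto_tsum_sphereZetaRemainder
    rw [← sub_eq_add_neg] at hlim
    refine hlim.congr' (eventually_nhdsWithin_of_forall fun s (hs : 1 < s) => ?_)
    dsimp only [Function.comp_apply]
    rw [S_eq_two_mul_tsum_add_tsum_sphereZetaRemainder hs,
      show 2 * s - 1 - 1 = 2 * (s - 1) by ring]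
    field_simp
    ring
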